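/- arXiv:2201.03995 — 2 statements merged into one kernel-verified Lean document; each statement's English description precedes it below -/
import Mathlib

section
/- Let p ∈ (0, 1/2). Then the function (r, θ, z) ↦ (r·|z|⁻¹·θ⁻²)ᵖ · r is integrable over the region {(r,θ,z) : 0 ≤ r ≤ 1, |z| ≤ r, −π < θ ≤ π, θ ≠ 0, z ≠ 0}, but for p = 1/2 it is not integrable over this region. -/
open Real MeasureTheory

/-- The region `{0 ≤ r ≤ 1, |z| ≤ r, −π < θ ≤ π, θ ≠ 0, z ≠ 0}` in `(r,θ,z)`-space. -/
def bingRegion : Set (ℝ × ℝ × ℝ) :=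
  {x | 0 ≤ x.1 ∧ x.1 ≤ 1 ∧ |x.2.2| ≤ x.1 ∧ -π < x.2.1 ∧ x.2.1 ≤ π ∧ x.2.1 ≠ 0 ∧ x.2.2 ≠ 0}

/-!
For `0 < p` and `r ≤ 1` the integrand is at most `|θ|^(-2p) · |z|^(-p)`, a product of
one-variable powers, integrable near `0` exactly when `p < 1/2`. For `p = 1/2` and `0 < |z| ≤ r`
the integrand is at least `r / |θ|`, and by Fubini on a box inside the region this would make
`θ⁻¹` integrable on `(0, π]`.
-/

open Set
open scoped ENNReal

namespace MeasureTheory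

variable {α β E L : Type*} [MeasurableSpace α] [MeasurableSpace β] [NormedAddCommGroup E]
  [NormedRing L] {μ : Measure α} {ν : Measure β} [SFinite μ] [SFinite ν]
  {s : Set α} {t : Set β}

theorem IntegrableOn.mul_prod {f : α → L} {g : β → L} (hf : IntegrableOn f s μ)
    (hg : IntegrableOn g t ν) : IntegrableOn (fun x => f x.1 * g x.2) (s ×ˢ t) (μ.prod ν) := by
  rw [IntegrableOn, ← Measure.prod_restrict]
  exact Integrable.mul_prod hf hg

theorem IntegrableOn.comp_snd_prod {f : β → E} (hf : IntegrableOn f t ν)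
    (hs : μ s ≠ ∞) : IntegrableOn (fun x => f x.2) (s ×ˢ t) (μ.prod ν) := by
  have := isFiniteMeasure_restrict.2 hs
  rw [IntegrableOn, ← Measure.prod_restrict]
  exact Integrable.comp_snd hf _

theorem IntegrableOn.of_comp_snd_prod {f : β → E}
    (hf : IntegrableOn (fun x => f x.2) (s ×ˢ t) (μ.prod ν)) (hs : μ s ≠ 0) :
    IntegrableOn f t ν := by
  rw [IntegrableOn, ← Measure.prod_restrict] at hf
  exact hf.of_comp_snd (by simpa using hs)

theorem IntegrableOn.of_comp_fst_prod {f : α → E}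
    (hf : IntegrableOn (fun x => f x.1) (s ×ˢ t) (μ.prod ν)) (ht : ν t ≠ 0) :
    IntegrableOn f s μ := by
  rw [IntegrableOn, ← Measure.prod_restrict] at hf
  exact hf.of_comp_fst (by simpa using ht)

end MeasureTheory

theorem intervalIntegrable_abs_rpow {s : ℝ} (hs : -1 < s) (a b : ℝ) :
    IntervalIntegrable (fun x : ℝ => |x| ^ s) volume a b := by
  have from_zero : ∀ c, IntervalIntegrable (fun x : ℝ => |x| ^ s) volume 0 c := by
    suffices ∀ c, 0 ≤ c → IntervalIntegrable (fun x : ℝ => |x| ^ s) volume 0 c by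
      intro c
      rcases le_total 0 c with hc | hc
      · exact this c hc
      · simpa using (IntervalIntegrable.iff_comp_neg).1 (this (-c) (neg_nonneg.2 hc))
    intro c hc
    rw [intervalIntegrable_iff_integrableOn_Ioc_of_le hc]
    refine (intervalIntegral.intervalIntegrable_rpow' hs).1.congr_fun (fun x hx => ?_)
      measurableSet_Ioc
    rw [abs_of_pos hx.1]
  exact (from_zero a).symm.trans (from_zero b)

theorem not_integrableOn_Ioc_inv {b : ℝ} (hb : 0 < b) :
    ¬ IntegrableOn (fun x : ℝ => x⁻¹) (Ioc 0 b) := by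
  rw [← intervalIntegrable_iff_integrableOn_Ioc_of_le hb.le]
  simp [hb.ne]

theorem rpow_inv_sq (θ p : ℝ) : ((θ ^ 2)⁻¹) ^ p = |θ| ^ (-(2 * p)) := by
  rw [← sq_abs, inv_rpow (sq_nonneg _), ← rpow_two, ← rpow_mul (abs_nonneg _),
    rpow_neg (abs_nonneg _)]

/-- The integrand `K_h^p · r` of the theorem: the `p`-th power of the distortion
`r · |z|⁻¹ · θ⁻²` times the cylindrical volume element `r`. -/
noncomputable def bingIntegrand (p : ℝ) (x : ℝ × ℝ × ℝ) : ℝ :=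
  (x.1 * |x.2.2|⁻¹ * (x.2.1 ^ 2)⁻¹) ^ p * x.1

theorem measurable_bingIntegrand (p : ℝ) : Measurable (bingIntegrand p) :=
  (((measurable_fst.mul measurable_snd.snd.abs.inv).mul
    ((measurable_snd.fst.pow_const 2).inv)).pow_const p).mul measurable_fst

theorem measurableSet_bingRegion : MeasurableSet bingRegion := by
  have hr : Measurable fun x : ℝ × ℝ × ℝ => x.1 := measurable_fst
  have hθ : Measurable fun x : ℝ × ℝ × ℝ => x.2.1 := measurable_snd.fst
  have hz : Measurable fun x : ℝ × ℝ × ℝ => x.2.2 := measurable_snd.snd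
  exact (measurableSet_le measurable_const hr).inter <|
    (measurableSet_le hr measurable_const).inter <|
    (measurableSet_le hz.abs hr).inter <|
    (measurableSet_lt measurable_const hθ).inter <|
    (measurableSet_le hθ measurable_const).inter <|
    (hθ (measurableSet_singleton 0)).compl.inter (hz (measurableSet_singleton 0)).compl

theorem bingIntegrand_nonneg (p : ℝ) {r : ℝ} (θ z : ℝ) (hr : 0 ≤ r) :
    0 ≤ bingIntegrand p (r, θ, z) := by
  unfold bingIntegrand
  positivity

theorem bingIntegrand_le {p r : ℝ} (θ z : ℝ) (hp : 0 ≤ p) (hr0 : 0 ≤ r) (hr1 : r ≤ 1) :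
    bingIntegrand p (r, θ, z) ≤ |θ| ^ (-(2 * p)) * |z| ^ (-p) := by
  have hpow : (r * |z|⁻¹ * (θ ^ 2)⁻¹) ^ p = r ^ p * (|θ| ^ (-(2 * p)) * |z| ^ (-p)) := by
    rw [mul_rpow (by positivity) (by positivity), mul_rpow hr0 (by positivity),
      inv_rpow (abs_nonneg _), ← rpow_neg (abs_nonneg _), rpow_inv_sq]
    ring
  have hrp : r ^ p ≤ 1 := rpow_le_one hr0 hr1 hp
  calc bingIntegrand p (r, θ, z)
      = r ^ p * (|θ| ^ (-(2 * p)) * |z| ^ (-p)) * r := hpow ▸ rfl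
    _ ≤ 1 * (|θ| ^ (-(2 * p)) * |z| ^ (-p)) * 1 := by gcongr
    _ = |θ| ^ (-(2 * p)) * |z| ^ (-p) := by ring

theorem mul_abs_inv_le_bingIntegrand_half {r θ z : ℝ} (hz : z ≠ 0) (hzr : |z| ≤ r) :
    r * |θ|⁻¹ ≤ bingIntegrand (1 / 2) (r, θ, z) := by
  have hr : 0 ≤ r := (abs_nonneg z).trans hzr
  have hratio : 1 ≤ r * |z|⁻¹ := by
    rw [← div_eq_mul_inv, one_le_div (abs_pos.2 hz)]
    exact hzr
  have hsqrt : |θ|⁻¹ ≤ (r * |z|⁻¹ * (θ ^ 2)⁻¹) ^ ((1 : ℝ) / 2) := by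
    rw [← sqrt_eq_rpow, ← sqrt_sq_eq_abs, ← sqrt_inv]
    exact sqrt_le_sqrt (le_mul_of_one_le_left (by positivity) hratio)
  rw [mul_comm]
  exact mul_le_mul_of_nonneg_right hsqrt hr

theorem integrableOn_bingIntegrand {p : ℝ} (hp0 : 0 < p) (hp : p < 1 / 2) :
    IntegrableOn (bingIntegrand p) bingRegion := by
  have hθ : IntegrableOn (fun θ : ℝ => |θ| ^ (-(2 * p))) (Icc (-π) π) :=
    (intervalIntegrable_iff_integrableOn_Icc_of_le (by linarith [pi_pos])).1
      (intervalIntegrable_abs_rpow (by linarith) _ _)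
  have hz : IntegrableOn (fun z : ℝ => |z| ^ (-p)) (Icc (-1) 1) :=
    (intervalIntegrable_iff_integrableOn_Icc_of_le (by norm_num)).1
      (intervalIntegrable_abs_rpow (by linarith) _ _)
  have hdom : IntegrableOn (fun x : ℝ × ℝ × ℝ => |x.2.1| ^ (-(2 * p)) * |x.2.2| ^ (-p))
      (Icc 0 1 ×ˢ (Icc (-π) π ×ˢ Icc (-1) 1)) :=
    (hθ.mul_prod hz).comp_snd_prod (by simp)
  have hsub : bingRegion ⊆ Icc 0 1 ×ˢ (Icc (-π) π ×ˢ Icc (-1) 1) :=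
    fun x ⟨hr0, hr1, hzr, hθ0, hθ1, _, _⟩ =>
      ⟨⟨hr0, hr1⟩, ⟨hθ0.le, hθ1⟩, abs_le.1 (hzr.trans hr1)⟩
  refine (hdom.mono_set hsub).mono' (measurable_bingIntegrand p).aestronglyMeasurable ?_
  refine (ae_restrict_iff' measurableSet_bingRegion).2 (ae_of_all _ ?_)
  rintro ⟨r, θ, z⟩ ⟨hr0, hr1, -⟩
  rw [Real.norm_of_nonneg (bingIntegrand_nonneg p θ z hr0)]
  exact bingIntegrand_le θ z hp0.le hr0 hr1

theorem not_integrableOn_bingIntegrand_half :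
    ¬ IntegrableOn (bingIntegrand (1 / 2)) bingRegion := by
  intro h
  have hsub : Icc (1 / 2) 1 ×ˢ (Ioc 0 π ×ˢ Ioc 0 (1 / 2)) ⊆ bingRegion := by
    rintro ⟨r, θ, z⟩ ⟨⟨hr0, hr1⟩, ⟨hθ0, hθ1⟩, hz0, hz1⟩
    refine ⟨by linarith, hr1, ?_, by linarith [pi_pos], hθ1, hθ0.ne', hz0.ne'⟩
    rw [abs_of_pos hz0]
    linarith
  have hinv : IntegrableOn (fun x : ℝ × ℝ × ℝ => x.2.1⁻¹)
      (Icc (1 / 2) 1 ×ˢ (Ioc 0 π ×ˢ Ioc 0 (1 / 2))) := by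
    refine ((h.mono_set hsub).const_mul 2).mono' measurable_snd.fst.inv.aestronglyMeasurable ?_
    refine (ae_restrict_iff' (measurableSet_Icc.prod (measurableSet_Ioc.prod measurableSet_Ioc))).2
      (ae_of_all _ ?_)
    rintro ⟨r, θ, z⟩ ⟨⟨hr, -⟩, ⟨hθ, -⟩, hz, hzr⟩
    have hzr' : |z| ≤ r := by rw [abs_of_pos hz]; linarith
    rw [Real.norm_of_nonneg (inv_nonneg.2 hθ.le)]
    calc θ⁻¹ ≤ 2 * (r * |θ|⁻¹) := by
          rw [abs_of_pos hθ]
          nlinarith [inv_pos.2 hθ]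
      _ ≤ 2 * bingIntegrand (1 / 2) (r, θ, z) := by
          gcongr
          exact mul_abs_inv_le_bingIntegrand_half hz.ne' hzr'
  have hθ := (hinv.of_comp_snd_prod (by norm_num)).of_comp_fst_prod (by simp)
  exact not_integrableOn_Ioc_inv pi_pos hθ

/-- For `0 < p < 1/2` the function `(r,θ,z) ↦ (r·|z|⁻¹·θ⁻²)ᵖ·r` is integrable over
`bingRegion`, but for `p = 1/2` it is not. -/
theorem bing_distortion_integrability (p : ℝ) (hp0 : 0 < p) (hp : p < 1 / 2) :
    IntegrableOn (fun x : ℝ × ℝ × ℝ => (x.1 * |x.2.2|⁻¹ * (x.2.1 ^ 2)⁻¹) ^ p * x.1)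
        bingRegion volume ∧
      ¬ IntegrableOn (fun x : ℝ × ℝ × ℝ =>
          (x.1 * |x.2.2|⁻¹ * (x.2.1 ^ 2)⁻¹) ^ ((1 : ℝ) / 2) * x.1) bingRegion volume :=
  ⟨integrableOn_bingIntegrand hp0 hp, not_integrableOn_bingIntegrand_half⟩
end

section
/- Define h : ℝ³ → ℝ³ in cylindrical coordinates (r,θ,z), r ≥ 0, θ ∈ (−π,π], in the region |r−1| + |z| ≤ 1 by h(r,θ,z) = ((|θ|/π)(r−1+|r−1|+|z|) − (|r−1|+|z|))·e_x + (|θ|/π)·z·e_y + ((π−|θ|)θ/π²)(r−1+|r−1|+|z|)·e_z. Then h maps the circle {r = 1, z = 0} to the origin 0 ∈ ℝ³, and for each c ∈ (0,1], h maps the set {θ = 0, |r−1|+|z| = c} ∪ {r ≤ 1, z = 0, |r−1| = c} to the single point −c·e_x. -/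
open Real

/-- Formula (1) of the paper: the Bing-type map `h` in cylindrical coordinates `(r,θ,z)`,
valid in the region `|r−1| + |z| ≤ 1`; the value is a point of `ℝ³ = ℝ × ℝ × ℝ`
in Cartesian coordinates `(x,y,z)`. -/
noncomputable def bingFormula1 (r θ z : ℝ) : ℝ × ℝ × ℝ :=
  ((|θ| / π) * (r - 1 + |r - 1| + |z|) - (|r - 1| + |z|),
    (|θ| / π) * z,
    ((π - |θ|) * θ / π ^ 2) * (r - 1 + |r - 1| + |z|))

/-- The map of formula (1) collapses the circle `{r = 1, z = 0}` to the origin, and for each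
`c ∈ (0,1]` it collapses the set `{θ = 0, |r−1|+|z| = c} ∪ {r ≤ 1, z = 0, |r−1| = c}`
to the single point `−c·e_x`. -/
theorem bing_map_collapsing :
    (∀ θ : ℝ, -π < θ → θ ≤ π → bingFormula1 1 θ 0 = (0, 0, 0)) ∧
      ∀ c : ℝ, 0 < c → c ≤ 1 →
        (∀ r z : ℝ, 0 ≤ r → |r - 1| + |z| = c → bingFormula1 r 0 z = (-c, 0, 0)) ∧
        (∀ r θ : ℝ, 0 ≤ r → r ≤ 1 → |r - 1| = c → -π < θ → θ ≤ π →
          bingFormula1 r θ 0 = (-c, 0, 0)) := by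
  refine ⟨fun θ _ _ => ?_, fun c _ _ => ⟨fun r z _ h => ?_, fun r θ _ hr1 h _ _ => ?_⟩⟩
  · simp [bingFormula1]
  · simp only [bingFormula1, abs_zero, zero_div, zero_mul, mul_zero, zero_sub, h,
      zero_mul, mul_zero]
  · have h0 : r - 1 + |r - 1| = 0 := by
      rw [abs_of_nonpos (by linarith)]; ring
    simp [bingFormula1, h0, ← h, abs_of_nonpos (show r - 1 ≤ 0 by linarith)]
end
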